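/- arXiv:2503.20593 — 8 statements merged into one kernel-verified Lean document; each statement's English description precedes it below -/
import Mathlib

section
/- Let r be a relation over R with surrogate key SK (so t ↦ t(SK) is injective on r) and potential key X ⊆ R \ {SK}. Then π_SK(clean_SK(r, SK, X)) = { min c : c ∈ [SK]_X^r }, the map c ↦ min c is injective on [SK]_X^r, and consequently the number of distinct SK-values of clean_SK(r, SK, X) equals |[SK]_X^r|. -/
/-- Artificially unique duplicates: `t₁ ≡ t₂` iff `sim (t₁ A) (t₂ A)` for every `A ∈ X`. -/
def AUD {R D : Type*} (sim : D → D → Prop) (X : Set R) (t₁ t₂ : R → D) : Prop :=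
  ∀ A ∈ X, sim (t₁ A) (t₂ A)

/-- The equivalence class `[t(SK)] = { t'(SK) : t' ∈ r, t ≡ t' }`. -/
def eqClass {R D : Type*} (r : Set (R → D)) (sim : D → D → Prop) (X : Set R) (SK : R)
    (t : R → D) : Set D :=
  { v | ∃ t' ∈ r, AUD sim X t t' ∧ v = t' SK }

/-- `[SK]_X^r`, the set of all equivalence classes of `SK` in `r` with respect to `X`. -/
def classes {R D : Type*} (r : Set (R → D)) (sim : D → D → Prop) (X : Set R) (SK : R) :
    Set (Set D) :=
  { c | ∃ t ∈ r, c = eqClass r sim X SK t }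

/-- `clean_SK(r, SK, X)`: tuples agreeing with some `t' ∈ r` on `R \ {SK}` and whose
`SK`-value is the minimum (the least element) of the equivalence class `[t'(SK)]`. -/
def cleanSK {R D : Type*} [LinearOrder D] (r : Set (R → D)) (sim : D → D → Prop)
    (X : Set R) (SK : R) : Set (R → D) :=
  { t | ∃ t' ∈ r, (∀ A, A ≠ SK → t A = t' A) ∧ IsLeast (eqClass r sim X SK t') (t SK) }

/-- `π_SK(clean_SK(r, SK, X)) = { min c : c ∈ [SK]_X^r }`, the map
`c ↦ min c` is injective on `[SK]_X^r`, and consequently the number of distinct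
`SK`-values of `clean_SK(r, SK, X)` equals `|[SK]_X^r|`. -/
theorem cleanSK_proj_eq_min_classes {R D : Type*} [LinearOrder D]
    (r : Set (R → D)) (hfin : r.Finite)
    (sim : D → D → Prop) (hsim : Equivalence sim)
    (SK : R) (hSK : Set.InjOn (fun t => t SK) r)
    (X : Set R) (hX : SK ∉ X) :
    ((fun t => t SK) '' cleanSK r sim X SK
        = { v | ∃ c ∈ classes r sim X SK, IsLeast c v }) ∧
    (∀ c₁ ∈ classes r sim X SK, ∀ c₂ ∈ classes r sim X SK, ∀ v,
      IsLeast c₁ v → IsLeast c₂ v → c₁ = c₂) ∧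
    ((fun t => t SK) '' cleanSK r sim X SK).ncard = (classes r sim X SK).ncard := by
  classical
  have hproj : (fun t => t SK) '' cleanSK r sim X SK
      = { v | ∃ c ∈ classes r sim X SK, IsLeast c v } := by
    ext v
    constructor
    · rintro ⟨t, ⟨t', ht', hagree, hleast⟩, rfl⟩
      exact ⟨eqClass r sim X SK t', ⟨t', ht', rfl⟩, hleast⟩
    · rintro ⟨c, ⟨t', ht', rfl⟩, hleast⟩
      refine ⟨Function.update t' SK v, ⟨t', ht', ?_, ?_⟩, ?_⟩
      · intro A hA; simp [Function.update_of_ne hA]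
      · simpa using hleast
      · simp
  have hinj : ∀ c₁ ∈ classes r sim X SK, ∀ c₂ ∈ classes r sim X SK, ∀ v,
      IsLeast c₁ v → IsLeast c₂ v → c₁ = c₂ := by
    rintro c₁ ⟨t₁, ht₁, rfl⟩ c₂ ⟨t₂, ht₂, rfl⟩ v h₁ h₂
    obtain ⟨s₁, hs₁, haud₁, hv₁⟩ := h₁.1
    obtain ⟨s₂, hs₂, haud₂, hv₂⟩ := h₂.1
    have hs : s₁ = s₂ := hSK hs₁ hs₂ (by simp [← hv₁, ← hv₂])
    subst hs
    have haud : AUD sim X t₁ t₂ := fun A hA =>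
      hsim.trans (haud₁ A hA) (hsim.symm (haud₂ A hA))
    ext w
    constructor
    · rintro ⟨s, hs, ha, rfl⟩
      exact ⟨s, hs, fun A hA => hsim.trans (hsim.symm (haud A hA)) (ha A hA), rfl⟩
    · rintro ⟨s, hs, ha, rfl⟩
      exact ⟨s, hs, fun A hA => hsim.trans (haud A hA) (ha A hA), rfl⟩
  refine ⟨hproj, hinj, ?_⟩
  rcases Set.eq_empty_or_nonempty r with hr | ⟨t₀, ht₀⟩
  · have h1 : classes r sim X SK = ∅ := by
      ext c; simp [classes, hr]
    have h2 : cleanSK r sim X SK = ∅ := by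
      ext t; simp [cleanSK, hr]
    simp [h1, h2]
  · -- every class has a least element
    have hleast_ex : ∀ c ∈ classes r sim X SK, ∃ v, IsLeast c v := by
      rintro c ⟨t, ht, rfl⟩
      have hne : (eqClass r sim X SK t).Nonempty :=
        ⟨t SK, t, ht, fun A _ => hsim.refl _, rfl⟩
      have hsub : eqClass r sim X SK t ⊆ (fun s => s SK) '' r := by
        rintro w ⟨s, hs, _, rfl⟩; exact ⟨s, hs, rfl⟩
      have hcf : (eqClass r sim X SK t).Finite := (hfin.image _).subset hsub
      obtain ⟨b, hb, hmin⟩ := Set.exists_min_image _ id hcf hne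
      exact ⟨b, hb, hmin⟩
    set f : Set D → D := fun c => if h : ∃ v, IsLeast c v then h.choose else t₀ SK with hf
    have hfleast : ∀ c ∈ classes r sim X SK, IsLeast c (f c) := by
      intro c hc
      obtain ⟨v, hv⟩ := hleast_ex c hc
      have h : ∃ v, IsLeast c v := ⟨v, hv⟩
      simp only [hf, dif_pos h]
      exact h.choose_spec
    have himg : f '' classes r sim X SK = { v | ∃ c ∈ classes r sim X SK, IsLeast c v } := by
      ext v
      constructor
      · rintro ⟨c, hc, rfl⟩
        exact ⟨c, hc, hfleast c hc⟩
      · rintro ⟨c, hc, hv⟩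
        exact ⟨c, hc, ((hfleast c hc).unique hv)⟩
    have hfinj : Set.InjOn f (classes r sim X SK) := by
      intro c₁ h₁ c₂ h₂ he
      exact hinj c₁ h₁ c₂ h₂ (f c₁) (hfleast c₁ h₁) (he ▸ hfleast c₂ h₂)
    rw [hproj, ← himg, Set.ncard_image_of_injOn hfinj]
end

section
/- Let r be a relation over R with surrogate key SK and potential key X ⊆ R \ {SK}, and let r' = clean_SK(r, SK, X). Then r' does not suffer from artificial unicity: for all t₁, t₂ ∈ r', if t₁(A) ≃ t₂(A) for every A ∈ X, then t₁(SK) = t₂(SK). -/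
/-- `r' = clean_SK(r, SK, X)` does not suffer from artificial unicity: for
all `t₁, t₂ ∈ r'`, if `t₁ A ≃ t₂ A` for every `A ∈ X`, then `t₁ SK = t₂ SK`. -/
theorem cleanSK_no_artificial_unicity {R D : Type*} [LinearOrder D]
    (r : Set (R → D)) (hfin : r.Finite)
    (sim : D → D → Prop) (hsim : Equivalence sim)
    (SK : R) (hSK : Set.InjOn (fun t => t SK) r)
    (X : Set R) (hX : SK ∉ X) :
    ∀ t₁ ∈ cleanSK r sim X SK, ∀ t₂ ∈ cleanSK r sim X SK,
      AUD sim X t₁ t₂ → t₁ SK = t₂ SK := by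
  intro t₁ ht₁ t₂ ht₂ haud
  obtain ⟨u₁, hu₁r, hagr₁, hle₁⟩ := ht₁
  obtain ⟨u₂, hu₂r, hagr₂, hle₂⟩ := ht₂
  have haud' : AUD sim X u₁ u₂ := by
    intro A hA
    have hAne : A ≠ SK := fun h => hX (h ▸ hA)
    have e1 := hagr₁ A hAne
    have e2 := hagr₂ A hAne
    have := haud A hA
    rw [e1, e2] at this
    exact this
  have hcls : eqClass r sim X SK u₁ = eqClass r sim X SK u₂ := by
    ext v
    constructor
    · rintro ⟨t', ht'r, ha, rfl⟩
      exact ⟨t', ht'r, fun A hA => hsim.trans (hsim.symm (haud' A hA)) (ha A hA), rfl⟩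
    · rintro ⟨t', ht'r, ha, rfl⟩
      exact ⟨t', ht'r, fun A hA => hsim.trans (haud' A hA) (ha A hA), rfl⟩
  rw [hcls] at hle₁
  exact le_antisymm (hle₁.2 hle₂.1) (hle₂.2 hle₁.1)
end

section
/- Let r be a relation over R with surrogate key SK and potential key X ⊆ R \ {SK}. Then the projection onto the non-surrogate attributes is preserved by cleaning, π_{R \ {SK}}(clean_SK(r, SK, X)) = π_{R \ {SK}}(r), and moreover |clean_SK(r, SK, X)| ≤ |r|. -/
/-- the projection onto the non-surrogate attributes `R \ {SK}` is
preserved by cleaning, `π_{R \ {SK}}(clean_SK(r, SK, X)) = π_{R \ {SK}}(r)`, and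
moreover `|clean_SK(r, SK, X)| ≤ |r|`. -/
theorem cleanSK_proj_preserved_and_card_le {R D : Type*} [LinearOrder D]
    (r : Set (R → D)) (hfin : r.Finite)
    (sim : D → D → Prop) (hsim : Equivalence sim)
    (SK : R) (hSK : Set.InjOn (fun t => t SK) r)
    (X : Set R) (hX : SK ∉ X) :
    ((fun t => fun A : {A : R // A ≠ SK} => t A.1) '' cleanSK r sim X SK
        = (fun t => fun A : {A : R // A ≠ SK} => t A.1) '' r) ∧
    (cleanSK r sim X SK).ncard ≤ r.ncard := by
  classical
  constructor
  · ext f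
    simp only [Set.mem_image]
    constructor
    · rintro ⟨t, ⟨t', ht'r, hagree, hleast⟩, rfl⟩
      exact ⟨t', ht'r, funext fun A => (hagree A.1 A.2).symm⟩
    · rintro ⟨t', ht'r, rfl⟩
      have hne : (eqClass r sim X SK t').Nonempty :=
        ⟨t' SK, t', ht'r, fun A _ => hsim.refl _, rfl⟩
      have hfin' : (eqClass r sim X SK t').Finite := by
        apply ((hfin.image (fun t => t SK))).subset
        rintro v ⟨t'', ht''r, _, rfl⟩
        exact ⟨t'', ht''r, rfl⟩
      have hne' : hfin'.toFinset.Nonempty := by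
        simpa [Set.Finite.toFinset] using hne
      set m := hfin'.toFinset.min' hne' with hm
      have hmem : m ∈ eqClass r sim X SK t' := by
        have := hfin'.toFinset.min'_mem hne'
        simpa using this
      have hleast : IsLeast (eqClass r sim X SK t') m := by
        refine ⟨hmem, fun v hv => ?_⟩
        exact hfin'.toFinset.min'_le v (by simpa using hv)
      refine ⟨Function.update t' SK m, ⟨t', ht'r, fun A hA => Function.update_of_ne hA _ _,
        by simpa using hleast⟩, funext fun A => by
          simp [Function.update_of_ne A.2]⟩
  · refine Set.ncard_le_ncard_of_injOn
      (fun t => if h : t ∈ cleanSK r sim X SK then h.choose else t) ?_ ?_ hfin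
    · intro t ht
      simp only [ht, dif_pos]
      exact ht.choose_spec.1
    · intro t₁ h₁ t₂ h₂ heq
      simp only [h₁, h₂, dif_pos] at heq
      obtain ⟨hr₁, hag₁, hl₁⟩ := h₁.choose_spec
      obtain ⟨hr₂, hag₂, hl₂⟩ := h₂.choose_spec
      have hSKeq : t₁ SK = t₂ SK := by
        rw [heq] at hl₁
        exact hl₁.unique hl₂
      funext A
      by_cases hA : A = SK
      · rw [hA]; exact hSKeq
      · rw [hag₁ A hA, heq, ← hag₂ A hA]
end

section
/- Every equivalence class of the cleaned relation is a singleton: for every t ∈ clean_SK(r, SK, X), the equivalence class of t(SK) computed in clean_SK(r, SK, X) equals {t(SK)}. -/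
/-- every equivalence class of the cleaned relation is a singleton: for
every `t ∈ clean_SK(r, SK, X)`, the equivalence class of `t SK` computed in
`clean_SK(r, SK, X)` equals `{t SK}`. -/
theorem cleanSK_eqClass_singleton {R D : Type*} [LinearOrder D]
    (r : Set (R → D)) (hfin : r.Finite)
    (sim : D → D → Prop) (hsim : Equivalence sim)
    (SK : R) (hSK : Set.InjOn (fun t => t SK) r)
    (X : Set R) (hX : SK ∉ X) :
    ∀ t ∈ cleanSK r sim X SK,
      eqClass (cleanSK r sim X SK) sim X SK t = {t SK} := by
  rintro t ht
  obtain ⟨s, hs, hagree, hleast⟩ := ht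
  ext v
  constructor
  · rintro ⟨t'', ⟨s', hs', hagree', hleast'⟩, haud, rfl⟩
    have hss' : AUD sim X s s' := fun A hA => by
      have h1 := hagree A (fun h => hX (h ▸ hA))
      have h2 := hagree' A (fun h => hX (h ▸ hA))
      rw [← h1, ← h2]; exact haud A hA
    have hEq : eqClass r sim X SK s = eqClass r sim X SK s' := by
      ext w; constructor
      · rintro ⟨u, hu, hau, rfl⟩
        exact ⟨u, hu, fun A hA => hsim.trans (hsim.symm (hss' A hA)) (hau A hA), rfl⟩
      · rintro ⟨u, hu, hau, rfl⟩
        exact ⟨u, hu, fun A hA => hsim.trans (hss' A hA) (hau A hA), rfl⟩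
    rw [← hEq] at hleast'
    have heq : t'' SK = t SK := le_antisymm (hleast'.2 hleast.1) (hleast.2 hleast'.1)
    simp [heq]
  · rintro hv
    rw [Set.mem_singleton_iff] at hv
    exact ⟨t, ⟨s, hs, hagree, hleast⟩, fun A _ => hsim.refl _, hv⟩
end

section
/- Let r be a nonempty relation over R with surrogate key SK (so t ↦ t(SK) is injective on r) and potential key X ⊆ R \ {SK}. Then AU(r, X) = 0 if and only if r does not suffer from artificial unicity, i.e., if and only if there are no t₁, t₂ ∈ r with t₁ ≡ t₂ and t₁(SK) ≠ t₂(SK). -/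
/-- The level of artificial unicity: `AU(r, X) = 1 − |[SK]_X^r| / |r|`. -/
noncomputable def AU {R D : Type*} (r : Set (R → D)) (sim : D → D → Prop) (X : Set R)
    (SK : R) : ℝ :=
  1 - ((classes r sim X SK).ncard : ℝ) / (r.ncard : ℝ)

lemma eqClass_congr {R D : Type*} (r : Set (R → D)) (sim : D → D → Prop) (hsim : Equivalence sim)
    (X : Set R) (SK : R) {t₁ t₂ : R → D} (h : AUD sim X t₁ t₂) :
    eqClass r sim X SK t₁ = eqClass r sim X SK t₂ := by
  ext v
  constructor
  · rintro ⟨t', ht', haud, rfl⟩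
    exact ⟨t', ht', fun A hA => hsim.trans (hsim.symm (h A hA)) (haud A hA), rfl⟩
  · rintro ⟨t', ht', haud, rfl⟩
    exact ⟨t', ht', fun A hA => hsim.trans (h A hA) (haud A hA), rfl⟩

/-- for a nonempty relation `r` with surrogate key `SK` (so `t ↦ t SK` is
injective on `r`) and potential key `X ⊆ R \ {SK}`, `AU(r, X) = 0` iff `r` does not
suffer from artificial unicity, i.e. iff there are no `t₁, t₂ ∈ r` with `t₁ ≡ t₂` and
`t₁ SK ≠ t₂ SK`. -/
theorem AU_eq_zero_iff_no_artificial_unicity {R D : Type*} [LinearOrder D]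
    (r : Set (R → D)) (hfin : r.Finite) (hne : r.Nonempty)
    (sim : D → D → Prop) (hsim : Equivalence sim)
    (SK : R) (hSK : Set.InjOn (fun t => t SK) r)
    (X : Set R) (hX : SK ∉ X) :
    AU r sim X SK = 0 ↔
      ¬ ∃ t₁ ∈ r, ∃ t₂ ∈ r, AUD sim X t₁ t₂ ∧ t₁ SK ≠ t₂ SK := by
  have himg : classes r sim X SK = (eqClass r sim X SK) '' r := by
    ext c
    simp only [classes, Set.mem_setOf_eq, Set.mem_image]
    constructor
    · rintro ⟨t, ht, rfl⟩; exact ⟨t, ht, rfl⟩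
    · rintro ⟨t, ht, rfl⟩; exact ⟨t, ht, rfl⟩
  have hrpos : (0 : ℝ) < (r.ncard : ℝ) := by
    have := (Set.ncard_pos hfin).mpr hne
    exact_mod_cast this
  have hAU : AU r sim X SK = 0 ↔ (classes r sim X SK).ncard = r.ncard := by
    unfold AU
    rw [sub_eq_zero, eq_comm, div_eq_one_iff_eq hrpos.ne']
    exact Nat.cast_inj
  rw [hAU, himg]
  constructor
  · intro h ⟨t₁, ht₁, t₂, ht₂, haud, hne'⟩
    have hinj := Set.injOn_of_ncard_image_eq h hfin
    exact hne' (congrArg (fun t => t SK)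
      (hinj ht₁ ht₂ (eqClass_congr r sim hsim X SK haud)))
  · intro h
    apply Set.ncard_image_of_injOn
    intro t₁ ht₁ t₂ ht₂ heq
    have hmem : t₁ SK ∈ eqClass r sim X SK t₂ := by
      rw [← heq]
      exact ⟨t₁, ht₁, fun A hA => hsim.refl _, rfl⟩
    obtain ⟨t', ht', haud, hv⟩ := hmem
    have : t₂ SK = t' SK := by
      by_contra hne'
      exact h ⟨t₂, ht₂, t', ht', haud, hne'⟩
    exact hSK ht₁ ht₂ (by simp only []; rw [hv, ← this])
end

section
/- Let r be a nonempty relation over R with surrogate key SK (so t ↦ t(SK) is injective on r) and potential key X ⊆ R \ {SK}. Then |[SK]_X^r| equals the maximum cardinality of a subset r' ⊆ r containing no two distinct tuples that are artificially unique duplicates; consequently AU(r, X) is the smallest proportion of tuples that must be removed from r so that no two distinct remaining tuples are artificially unique duplicates. -/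
/-- A subset `s` of tuples is duplicate-free if it contains no two distinct tuples that
are artificially unique duplicates. -/
def DupFree {R D : Type*} (sim : D → D → Prop) (X : Set R) (s : Set (R → D)) : Prop :=
  ∀ t₁ ∈ s, ∀ t₂ ∈ s, t₁ ≠ t₂ → ¬ AUD sim X t₁ t₂


lemma eqClass_eq_iff {R D : Type*} {r : Set (R → D)} {sim : D → D → Prop} {X : Set R} {SK : R}
    (hsim : Equivalence sim) (hSK : Set.InjOn (fun t => t SK) r)
    {t t' : R → D} (ht : t ∈ r) (ht' : t' ∈ r) :
    eqClass r sim X SK t = eqClass r sim X SK t' ↔ AUD sim X t t' := by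
  constructor
  · intro h
    have hmem : t SK ∈ eqClass r sim X SK t := ⟨t, ht, fun A _ => hsim.refl _, rfl⟩
    rw [h] at hmem
    obtain ⟨t'', ht'', haud, heq⟩ := hmem
    have heq' : t'' = t := hSK ht'' ht heq.symm
    subst heq'
    exact fun A hA => hsim.symm (haud A hA)
  · intro h
    ext v
    constructor
    · rintro ⟨u, hu, haud, rfl⟩
      exact ⟨u, hu, fun A hA => hsim.trans (hsim.symm (h A hA)) (haud A hA), rfl⟩
    · rintro ⟨u, hu, haud, rfl⟩
      exact ⟨u, hu, fun A hA => hsim.trans (h A hA) (haud A hA), rfl⟩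

/-- `|[SK]_X^r|` equals the maximum cardinality of a subset `s ⊆ r`
containing no two distinct tuples that are artificially unique duplicates; consequently
`AU(r, X)` is the smallest proportion of tuples that must be removed from `r` so that
no two distinct remaining tuples are artificially unique duplicates. -/

theorem classes_card_is_max_dupfree {R D : Type*} [LinearOrder D]
    (r : Set (R → D)) (hfin : r.Finite) (hne : r.Nonempty)
    (sim : D → D → Prop) (hsim : Equivalence sim)
    (SK : R) (hSK : Set.InjOn (fun t => t SK) r)
    (X : Set R) (hX : SK ∉ X) :
    IsGreatest {n : ℕ | ∃ s ⊆ r, DupFree sim X s ∧ n = s.ncard}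
      ((classes r sim X SK).ncard) ∧
    IsLeast {p : ℝ | ∃ s ⊆ r, DupFree sim X s ∧
        p = ((r.ncard : ℝ) - (s.ncard : ℝ)) / (r.ncard : ℝ)}
      (AU r sim X SK) := by
  classical
  set f := eqClass r sim X SK with hf
  have hclasses : classes r sim X SK = f '' r := by
    ext c; simp [classes, Set.mem_image, eq_comm]; exact Iff.rfl
  have hCfin : (classes r sim X SK).Finite := hclasses ▸ hfin.image f
  -- upper bound for any dupfree subset
  have hub : ∀ s ⊆ r, DupFree sim X s → s.ncard ≤ (classes r sim X SK).ncard := by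
    intro s hs hdf
    have hinj : Set.InjOn f s := by
      intro t₁ ht₁ t₂ ht₂ hfeq
      by_contra hne'
      exact hdf t₁ ht₁ t₂ ht₂ hne'
        ((eqClass_eq_iff hsim hSK (hs ht₁) (hs ht₂)).mp hfeq)
    calc s.ncard = (f '' s).ncard := (Set.ncard_image_of_injOn hinj).symm
      _ ≤ (classes r sim X SK).ncard := by
          apply Set.ncard_le_ncard _ hCfin
          rw [hclasses]; exact Set.image_mono hs
  -- construct a dupfree subset of maximal size
  have hrep : ∀ c ∈ classes r sim X SK, ∃ t ∈ r, c = f t := fun c hc => hc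
  have : Nonempty (R → D) := ⟨hne.some⟩
  choose! g hgr hgc using hrep
  set s₀ := g '' (classes r sim X SK) with hs₀
  have hs₀r : s₀ ⊆ r := by rintro t ⟨c, hc, rfl⟩; exact hgr c hc
  have hginj : Set.InjOn g (classes r sim X SK) := by
    intro c₁ h₁ c₂ h₂ h
    rw [hgc c₁ h₁, hgc c₂ h₂, h]
  have hs₀df : DupFree sim X s₀ := by
    rintro t₁ ⟨c₁, hc₁, rfl⟩ t₂ ⟨c₂, hc₂, rfl⟩ hne' haud
    apply hne'
    have hc : c₁ = c₂ := by
      rw [hgc c₁ hc₁, hgc c₂ hc₂]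
      exact (eqClass_eq_iff hsim hSK (hgr c₁ hc₁) (hgr c₂ hc₂)).mpr haud
    rw [hc]
  have hs₀card : s₀.ncard = (classes r sim X SK).ncard :=
    Set.ncard_image_of_injOn hginj
  have hgreat : IsGreatest {n : ℕ | ∃ s ⊆ r, DupFree sim X s ∧ n = s.ncard}
      ((classes r sim X SK).ncard) := by
    constructor
    · exact ⟨s₀, hs₀r, hs₀df, hs₀card.symm⟩
    · rintro n ⟨s, hs, hdf, rfl⟩
      exact hub s hs hdf
  refine ⟨hgreat, ?_, ?_⟩
  · have hr0 : (0 : ℝ) < (r.ncard : ℝ) := by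
      exact_mod_cast (Set.ncard_pos hfin).mpr hne
    refine ⟨s₀, hs₀r, hs₀df, ?_⟩
    rw [hs₀card, AU]
    field_simp
  · rintro p ⟨s, hs, hdf, rfl⟩
    have hr0 : (0 : ℝ) < (r.ncard : ℝ) := by
      exact_mod_cast (Set.ncard_pos hfin).mpr hne
    have hle : (s.ncard : ℝ) ≤ ((classes r sim X SK).ncard : ℝ) := by
      exact_mod_cast hub s hs hdf
    have : AU r sim X SK = ((r.ncard : ℝ) - ((classes r sim X SK).ncard : ℝ)) / (r.ncard : ℝ) := by
      rw [AU]; field_simp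
    rw [this]
    gcongr
end

section
/- Let r be a relation over R with surrogate key SK and potential key X ⊆ R \ {SK}, and suppose the similarity ≃ is equality on D. Then the cleaned relation clean_SK(r, SK, X) satisfies the functional dependency X → SK: any two of its tuples that agree on every attribute of X have equal SK-values. -/
/-- when the similarity `≃` is equality on `D`, the cleaned relation
`clean_SK(r, SK, X)` satisfies the functional dependency `X → SK`: any two of its
tuples that agree on every attribute of `X` have equal `SK`-values. -/
theorem cleanSK_satisfies_FD_X_SK {R D : Type*} [LinearOrder D]
    (r : Set (R → D)) (hfin : r.Finite)
    (SK : R) (hSK : Set.InjOn (fun t => t SK) r)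
    (X : Set R) (hX : SK ∉ X) :
    ∀ t₁ ∈ cleanSK r (· = ·) X SK, ∀ t₂ ∈ cleanSK r (· = ·) X SK,
      (∀ A ∈ X, t₁ A = t₂ A) → t₁ SK = t₂ SK := by
  rintro t₁ ⟨s₁, hs₁, ha₁, hl₁⟩ t₂ ⟨s₂, hs₂, ha₂, hl₂⟩ hagree
  have hXeq : ∀ A ∈ X, s₁ A = s₂ A := fun A hA => by
    have h1 := ha₁ A (fun h => hX (h ▸ hA))
    have h2 := ha₂ A (fun h => hX (h ▸ hA))
    rw [← h1, ← h2]; exact hagree A hA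
  have hclass : eqClass r (· = ·) X SK s₁ = eqClass r (· = ·) X SK s₂ := by
    ext v
    constructor <;> rintro ⟨t', ht', haud, rfl⟩ <;> refine ⟨t', ht', fun A hA => ?_, rfl⟩
    · rw [← hXeq A hA]; exact haud A hA
    · rw [hXeq A hA]; exact haud A hA
  rw [hclass] at hl₁
  exact hl₁.unique hl₂
end

section
/- (Correctness of the normalisation decomposition.) Let r be a relation over a finite attribute set R, let X ⊆ R₁ ⊆ R, set R₂ = X ∪ (R \ R₁), and suppose r satisfies the functional dependency X → A for every A ∈ R₁ \ X. Then the decomposition of r into π_{R₁}(r) and π_{R₂}(r) is lossless: r equals the natural join of π_{R₁}(r) and π_{R₂}(r), i.e., r = { t : t is a tuple over R whose restriction to R₁ belongs to π_{R₁}(r) and whose restriction to R₂ belongs to π_{R₂}(r) }. -/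
/-- A relation `r` satisfies the functional dependency `X → A` if any two of its tuples
agreeing on every attribute of `X` also agree on `A`. -/
def SatFD {R D : Type*} (X : Set R) (A : R) (r : Set (R → D)) : Prop :=
  ∀ t₁ ∈ r, ∀ t₂ ∈ r, (∀ B ∈ X, t₁ B = t₂ B) → t₁ A = t₂ A

/-- The projection `π_Y(r)` of a relation onto a set `Y` of attributes: the set of
restrictions to `Y` of the tuples of `r`. -/
def proj {R D : Type*} (Y : Set R) (r : Set (R → D)) : Set (Y → D) :=
  (fun (t : R → D) => fun A : Y => t A.1) '' r

/-- correctness of the normalisation decomposition: for a finite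
attribute set `R`, `X ⊆ R₁ ⊆ R`, `R₂ = X ∪ (R \ R₁)`, if `r` satisfies `X → A` for
every `A ∈ R₁ \ X`, then the decomposition of `r` into `π_{R₁}(r)` and `π_{R₂}(r)` is
lossless: `r` equals the natural join of `π_{R₁}(r)` and `π_{R₂}(r)`, i.e. the set of
tuples over `R` whose restriction to `R₁` belongs to `π_{R₁}(r)` and whose restriction
to `R₂` belongs to `π_{R₂}(r)`. -/
theorem normalisation_lossless_join {R D : Type*} [Finite R]
    (r : Set (R → D)) (hfin : r.Finite)
    (R₁ X : Set R) (hXR : X ⊆ R₁)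
    (hFD : ∀ A ∈ R₁ \ X, SatFD X A r) :
    r = { t : R → D |
      (fun A : R₁ => t A.1) ∈ proj R₁ r ∧
      (fun A : (X ∪ R₁ᶜ : Set R) => t A.1) ∈ proj (X ∪ R₁ᶜ) r } := by
  ext t
  simp only [Set.mem_setOf_eq, proj, Set.mem_image]
  constructor
  · intro ht
    exact ⟨⟨t, ht, rfl⟩, ⟨t, ht, rfl⟩⟩
  · rintro ⟨⟨t₁, ht₁, h₁⟩, ⟨t₂, ht₂, h₂⟩⟩
    have e₁ : ∀ B ∈ R₁, t₁ B = t B := fun B hB => congrFun h₁ ⟨B, hB⟩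
    have e₂ : ∀ B ∈ (X ∪ R₁ᶜ : Set R), t₂ B = t B := fun B hB => congrFun h₂ ⟨B, hB⟩
    have hX : ∀ B ∈ X, t₁ B = t₂ B := fun B hB => by
      rw [e₁ B (hXR hB), e₂ B (Or.inl hB)]
    have : t₂ = t := by
      funext B
      by_cases hB : B ∈ R₁
      · by_cases hBX : B ∈ X
        · exact e₂ B (Or.inl hBX)
        · rw [← (hFD B ⟨hB, hBX⟩ t₁ ht₁ t₂ ht₂ hX), e₁ B hB]
      · exact e₂ B (Or.inr hB)
    rwa [← this]
end
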